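/- Let A ∈ ℝ^{d×d} be a hollow symmetric matrix with nonnegative entries whose support graph has K connected components, the largest containing d*_max vertices. Let V ∈ ℝ^{d×K} be any matrix whose columns form an orthonormal basis of the kernel of the Laplacian ℒ(A) = diag(A𝟙_d) − A. Then for any w ∈ ℝ_{≥0}^K and any pair of distinct vertices i, j: ℳ(V, w)_{(ij)} = 0 if i and j lie in the same connected component, and ℳ(V, w)_{(ij)} ≥ min(w)·(1/|C(i)| + 1/|C(j)|) ≥ 2·min(w)/d*_max if i and j lie in different connected components, where |C(i)| is the number of vertices of the connected component containing i. -/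

import Mathlib

open scoped BigOperators
open Matrix

namespace FCLS

/-- Edge index: pairs `(i, j)` with `i < j`. -/
abbrev EdgeIdx (d : ℕ) := {p : Fin d × Fin d // p.1 < p.2}

/-- Hollow symmetric adjacency matrix attached to an edge vector. -/
def adjM {d : ℕ} (x : EdgeIdx d → ℝ) : Matrix (Fin d) (Fin d) ℝ :=
  Matrix.of fun i j =>
    if h : i < j then x ⟨(i, j), h⟩ else if h' : j < i then x ⟨(j, i), h'⟩ else 0

/-- Graph Laplacian of a square matrix. -/
def lapM {n : Type*} [Fintype n] [DecidableEq n] (A : Matrix n n ℝ) : Matrix n n ℝ :=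
  Matrix.diagonal (fun i => ∑ j, A i j) - A

/-- Graph Laplacian of an edge vector. -/
def lap {d : ℕ} (x : EdgeIdx d → ℝ) : Matrix (Fin d) (Fin d) ℝ := lapM (adjM x)

/-- Eigenvalues sorted in nondecreasing order (`0` when not Hermitian). -/
noncomputable def eigs {n : Type*} [Fintype n] [DecidableEq n] (A : Matrix n n ℝ) :
    Fin (Fintype.card n) → ℝ :=
  if hA : A.IsHermitian then
    (fun v : Fin (Fintype.card n) → ℝ => v ∘ Tuple.sort v)
      (hA.eigenvalues ∘ (Fintype.equivFin n).symm)
  else 0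

/-- `j`-th smallest eigenvalue, `1`-indexed. -/
noncomputable def eigAsc {n : Type*} [Fintype n] [DecidableEq n] (A : Matrix n n ℝ) (j : ℕ) : ℝ :=
  if h : j - 1 < Fintype.card n then eigs A ⟨j - 1, h⟩ else 0

/-- Laplacian coefficient `ℳ(V, w)`. -/
def lapCoeff {d K : ℕ} (V : Matrix (Fin d) (Fin K) ℝ) (w : Fin K → ℝ) : EdgeIdx d → ℝ :=
  fun e => ∑ k, w k * (V e.1.1 k - V e.1.2 k) ^ 2

/-- Support graph of an edge vector. -/
def suppGraph {d : ℕ} (x : EdgeIdx d → ℝ) : SimpleGraph (Fin d) :=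
  SimpleGraph.fromRel fun i j => ∃ h : i < j, x ⟨(i, j), h⟩ ≠ 0

/-- Support graph of a square matrix. -/
def suppGraphM {d : ℕ} (A : Matrix (Fin d) (Fin d) ℝ) : SimpleGraph (Fin d) :=
  SimpleGraph.fromRel fun i j => A i j ≠ 0

/-- Block support: edges whose endpoints lie in a common connected component
of the support graph. -/
def blockSupp {d : ℕ} (x : EdgeIdx d → ℝ) : Set (EdgeIdx d) :=
  {e | (suppGraph x).Reachable e.1.1 e.1.2}

/-- Number of vertices in the connected component of `i`. -/
noncomputable def compCard {d : ℕ} (G : SimpleGraph (Fin d)) (i : Fin d) : ℕ :=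
  Nat.card {j : Fin d // G.Reachable i j}

/-- Largest connected-component size. -/
noncomputable def maxCompCard {d : ℕ} (G : SimpleGraph (Fin d)) : ℕ :=
  Finset.univ.sup fun i => compCard G i

/-- Number of connected components. -/
noncomputable def numComp {d : ℕ} (G : SimpleGraph (Fin d)) : ℕ :=
  Nat.card G.ConnectedComponent

open Classical in
/-- Restriction of an edge vector to edges inside a vertex set. -/
noncomputable def restrictE {d : ℕ} (x : EdgeIdx d → ℝ) (S : Set (Fin d)) : EdgeIdx d → ℝ :=
  fun e => if e.1.1 ∈ S ∧ e.1.2 ∈ S then x e else 0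

/-- `j`-th smallest eigenvalue (1-indexed) of the Laplacian of the adjacency
submatrix on the vertex set `S`. -/
noncomputable def subLapEig {d : ℕ} (x : EdgeIdx d → ℝ) (S : Set (Fin d)) (j : ℕ) : ℝ :=
  letI : Fintype S := Fintype.ofFinite S
  eigAsc (lapM ((adjM x).submatrix (fun a : S => (a : Fin d)) fun a : S => (a : Fin d))) j

/-- Spectral (`ℓ2 → ℓ2` operator) norm of a matrix. -/
noncomputable def opNorm {m n : Type*} [Fintype m] [Fintype n] [DecidableEq n]
    (A : Matrix m n ℝ) : ℝ :=
  ‖LinearMap.toContinuousLinearMap (Matrix.toEuclideanLin A)‖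

/-- Entrywise `ℓ1` norm of a matrix. -/
noncomputable def matL1 {m n : Type*} [Fintype m] [Fintype n] (A : Matrix m n ℝ) : ℝ :=
  ∑ i, ∑ j, |A i j|

/-- Frobenius norm of a matrix. -/
noncomputable def frob {m n : Type*} [Fintype m] [Fintype n] (A : Matrix m n ℝ) : ℝ :=
  Real.sqrt (∑ i, ∑ j, A i j ^ 2)

/-- `ℓ1 → ℓ1` operator norm: maximal absolute row sum. -/
noncomputable def opOne {m n : Type*} [Fintype m] [Fintype n] (A : Matrix m n ℝ) : ℝ :=
  ⨆ i, ∑ j, |A i j|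

/-- `ℓ2 → ℓ∞` operator norm: maximal Euclidean row norm. -/
noncomputable def twoInf {m n : Type*} [Fintype m] [Fintype n] (A : Matrix m n ℝ) : ℝ :=
  ⨆ i, Real.sqrt (∑ j, A i j ^ 2)

/-- Max (absolute) entry of a vector. -/
noncomputable def vecMax {ι : Type*} [Fintype ι] (v : ι → ℝ) : ℝ := ⨆ i, |v i|

/-- `ℓ1` norm of a vector. -/
noncomputable def l1 {ι : Type*} [Fintype ι] (v : ι → ℝ) : ℝ := ∑ i, |v i|

/-- `ℓ2` norm of a vector. -/
noncomputable def l2 {ι : Type*} [Fintype ι] (v : ι → ℝ) : ℝ := Real.sqrt (∑ i, v i ^ 2)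

/-- SCAD-like folded concave penalty `g` with (within-domain) derivative `g'`. -/
structure SCADLike (g g' : ℝ → ℝ) (a0 a1 b1 b2 τ : ℝ) : Prop where
  a1_le_a0 : a1 ≤ a0
  a1_pos : 0 < a1
  b1_pos : 0 < b1
  b1_lt_b2 : b1 < b2
  map_zero : g 0 = 0
  mono : MonotoneOn g (Set.Ici 0)
  concave : ConcaveOn ℝ (Set.Ici 0) g
  hasDeriv : ∀ t ∈ Set.Ici (0 : ℝ), HasDerivWithinAt g (g' t) (Set.Ici 0) t
  deriv_zero : g' 0 = a0 * τ
  deriv_low : ∀ t : ℝ, 0 < t → t ≤ b1 * τ → a1 * τ ≤ g' t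
  deriv_high : ∀ t : ℝ, b2 * τ ≤ t → g' t = 0

/-- `(V, lam)` is an orthonormal eigendecomposition of `A`. -/
def IsEigenDecomp {d : ℕ} (A V : Matrix (Fin d) (Fin d) ℝ) (lam : Fin d → ℝ) : Prop :=
  Vᵀ * V = 1 ∧ ∀ k, A *ᵥ (fun i => V i k) = lam k • fun i => V i k

/-- LLA surrogate objective with weight vector `M`. -/
noncomputable def llaObj {d : ℕ} (ℓ : (EdgeIdx d → ℝ) → ℝ) (M β : EdgeIdx d → ℝ) : ℝ :=
  ℓ β + (1 / 2) * ∑ e, M e * |β e|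

/-- `out` is the output of one LLA step from `b` (for some orthonormal
eigendecomposition of `ℒ(|b|)`). -/
def LLAStep {d : ℕ} (ℓ : (EdgeIdx d → ℝ) → ℝ) (g' : ℝ → ℝ) (b out : EdgeIdx d → ℝ) : Prop :=
  ∃ V lam, IsEigenDecomp (lap fun e => |b e|) V lam ∧
    ∀ β, llaObj ℓ (lapCoeff V fun k => g' (lam k)) out ≤
      llaObj ℓ (lapCoeff V fun k => g' (lam k)) β

/-- `β` solves the weighted Lasso block-oracle problem with weights `w`. -/
def OrcLassoSol {d : ℕ} (ℓ : (EdgeIdx d → ℝ) → ℝ) (S : Set (EdgeIdx d))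
    (w β : EdgeIdx d → ℝ) : Prop :=
  (∀ e ∉ S, β e = 0) ∧
  ∀ γ : EdgeIdx d → ℝ, (∀ e ∉ S, γ e = 0) →
    ℓ β + (1 / 2) * ∑ e, w e * |β e| ≤ ℓ γ + (1 / 2) * ∑ e, w e * |γ e|

/-- The set `T_op(ρ, τ)` of weighted-Lasso-oracle solutions with small weights. -/
def TopSet {d : ℕ} (ℓ : (EdgeIdx d → ℝ) → ℝ) (S : Set (EdgeIdx d))
    (a0 τ ρ : ℝ) : Set (EdgeIdx d → ℝ) :=
  {β | ∃ w : EdgeIdx d → ℝ, (∀ e, 0 ≤ w e) ∧ (∀ e ∉ S, w e = 0) ∧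
      (∀ e, w e ≤ 2 ^ 5 * a0 * τ * ρ ^ 2) ∧ OrcLassoSol ℓ S w β}


/-!
`P = V Vᵀ` is the orthogonal projector onto `ker ℒ(A)`, which for a nonnegative symmetric `A`
consists of the vectors constant on the connected components of the support graph. Testing `P`
against component indicators gives `P a b = [a ~ b] / |C(b)|`, and then
`∑ₖ (V i k - V j k)² = P i i - 2 P i j + P j j` is `0` within a component and
`1/|C(i)| + 1/|C(j)|` across components; the weights only enter through `min w`.
-/

def ConstOnComponents {V : Type*} (G : SimpleGraph V) (v : V → ℝ) : Prop :=
  ∀ a b, G.Reachable a b → v a = v b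

theorem _root_.SimpleGraph.Reachable.apply_eq_of_forall_adj {V α : Type*} {G : SimpleGraph V}
    {f : V → α} (h : ∀ a b, G.Adj a b → f a = f b) {u v : V} (huv : G.Reachable u v) :
    f u = f v := by
  obtain ⟨p⟩ := huv
  induction p with
  | nil => rfl
  | cons hadj _ ih => exact (h _ _ hadj).trans ih

theorem iInf_mul_sum_le {ι : Type*} [Fintype ι] (w x : ι → ℝ) (hx : ∀ k, 0 ≤ x k) :
    (⨅ k, w k) * ∑ k, x k ≤ ∑ k, w k * x k := by
  rw [Finset.mul_sum]
  exact Finset.sum_le_sum fun k _ =>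
    mul_le_mul_of_nonneg_right (ciInf_le (Finite.bddBelow_range w) k) (hx k)

theorem two_mul_div_le_mul_one_div_add_one_div {m x y M : ℝ} (hm : 0 ≤ m) (hx : 0 < x)
    (hy : 0 < y) (hxM : x ≤ M) (hyM : y ≤ M) : 2 * m / M ≤ m * (1 / x + 1 / y) :=
  calc 2 * m / M = m * (1 / M + 1 / M) := by ring
    _ ≤ m * (1 / x + 1 / y) := by gcongr

section Laplacian

variable {n : Type*} [Fintype n] [DecidableEq n]

theorem lapM_mulVec_apply (A : Matrix n n ℝ) (v : n → ℝ) (i : n) :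
    (lapM A *ᵥ v) i = ∑ j, A i j * (v i - v j) := by
  simp [lapM, mulVec, dotProduct, diagonal_apply, sub_mul, mul_sub, Finset.sum_mul]

theorem two_mul_dotProduct_lapM_mulVec {A : Matrix n n ℝ} (hA : A.IsSymm) (v : n → ℝ) :
    2 * (v ⬝ᵥ (lapM A *ᵥ v)) = ∑ i, ∑ j, A i j * (v i - v j) ^ 2 := by
  have hrow : v ⬝ᵥ (lapM A *ᵥ v) = ∑ i, ∑ j, A i j * (v i - v j) * v i := by
    simp only [dotProduct, lapM_mulVec_apply, Finset.mul_sum]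
    exact Finset.sum_congr rfl fun i _ => Finset.sum_congr rfl fun j _ => by ring
  have hcol : v ⬝ᵥ (lapM A *ᵥ v) = ∑ i, ∑ j, A i j * (v j - v i) * v j := by
    rw [hrow, Finset.sum_comm]
    simp only [hA.apply]
  rw [two_mul]
  nth_rewrite 1 [hrow]
  rw [hcol, ← Finset.sum_add_distrib]
  refine Finset.sum_congr rfl fun i _ => ?_
  rw [← Finset.sum_add_distrib]
  exact Finset.sum_congr rfl fun j _ => by ring

theorem lapM_mulVec_eq_zero_iff {A : Matrix n n ℝ} (hA : A.IsSymm) (hnn : ∀ i j, 0 ≤ A i j)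
    {v : n → ℝ} : lapM A *ᵥ v = 0 ↔ ∀ i j, A i j ≠ 0 → v i = v j := by
  have hterm : ∀ i j, 0 ≤ A i j * (v i - v j) ^ 2 := fun i j =>
    mul_nonneg (hnn i j) (sq_nonneg _)
  constructor
  · intro hv i j hij
    have hsum : ∑ i, ∑ j, A i j * (v i - v j) ^ 2 = 0 := by
      rw [← two_mul_dotProduct_lapM_mulVec hA, hv, dotProduct_zero, mul_zero]
    have hrow := (Finset.sum_eq_zero_iff_of_nonneg fun i _ =>
      Finset.sum_nonneg fun j _ => hterm i j).1 hsum i (Finset.mem_univ i)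
    have hij' := (Finset.sum_eq_zero_iff_of_nonneg fun j _ => hterm i j).1 hrow j
      (Finset.mem_univ j)
    simpa [hij, sub_eq_zero] using hij'
  · intro h
    funext i
    rw [lapM_mulVec_apply]
    refine Finset.sum_eq_zero fun j _ => ?_
    by_cases hij : A i j = 0
    · simp [hij]
    · simp [h i j hij]

end Laplacian

section Projector

variable {n m : Type*} [Fintype m]

theorem mul_transpose_row_eq_mulVec (V : Matrix n m ℝ) (a : n) : (V * Vᵀ) a = V *ᵥ V a := by
  rw [mul_apply_eq_vecMul, vecMul_transpose]

theorem mul_transpose_mulVec_mulVec [DecidableEq m] [Fintype n] {V : Matrix n m ℝ}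
    (hV : Vᵀ * V = 1) (c : m → ℝ) : (V * Vᵀ) *ᵥ (V *ᵥ c) = V *ᵥ c := by
  rw [mulVec_mulVec, Matrix.mul_assoc, hV, Matrix.mul_one]

theorem sum_sub_sq_eq_mul_transpose (V : Matrix n m ℝ) (i j : n) :
    ∑ k, (V i k - V j k) ^ 2 = (V * Vᵀ) i i - 2 * (V * Vᵀ) i j + (V * Vᵀ) j j := by
  simp only [mul_apply, transpose_apply, Finset.mul_sum, ← Finset.sum_add_distrib,
    ← Finset.sum_sub_distrib]
  exact Finset.sum_congr rfl fun k _ => by ring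

theorem sum_smul_col_eq_mulVec (V : Matrix n m ℝ) (c : m → ℝ) :
    ∑ k, c k • (fun i => V i k) = V *ᵥ c := by
  ext i
  simp [mulVec, dotProduct, mul_comm]

theorem constOnComponents_mulVec {G : SimpleGraph n} {V : Matrix n m ℝ}
    (hV : ∀ k, ConstOnComponents G fun i => V i k) (c : m → ℝ) :
    ConstOnComponents G (V *ᵥ c) := fun a b hab =>
  Finset.sum_congr rfl fun k _ => by rw [hV k a b hab]

end Projector

section SupportGraph

variable {d : ℕ}

theorem lapM_mulVec_eq_zero_iff_constOnComponents {A : Matrix (Fin d) (Fin d) ℝ}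
    (hA : A.IsSymm) (hnn : ∀ i j, 0 ≤ A i j) {v : Fin d → ℝ} :
    lapM A *ᵥ v = 0 ↔ ConstOnComponents (suppGraphM A) v := by
  rw [lapM_mulVec_eq_zero_iff hA hnn]
  constructor
  · intro h a b hab
    refine hab.apply_eq_of_forall_adj fun p q hpq => ?_
    obtain ⟨-, hpq | hqp⟩ := (SimpleGraph.fromRel_adj _ p q).1 hpq
    · exact h p q hpq
    · exact (h q p hqp).symm
  · intro h i j hij
    by_cases hne : i = j
    · rw [hne]
    · exact h i j ((SimpleGraph.fromRel_adj _ i j).2 ⟨hne, Or.inl hij⟩).reachable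

theorem compCard_pos (G : SimpleGraph (Fin d)) (i : Fin d) : 0 < compCard G i :=
  have : Nonempty {j // G.Reachable i j} := ⟨⟨i, .refl i⟩⟩
  Nat.card_pos

theorem compCard_le_maxCompCard (G : SimpleGraph (Fin d)) (i : Fin d) :
    compCard G i ≤ maxCompCard G :=
  Finset.le_sup (Finset.mem_univ i)

open Classical in
theorem apply_eq_of_fixes_constOnComponents {G : SimpleGraph (Fin d)}
    {P : Matrix (Fin d) (Fin d) ℝ} (hrow : ∀ a, ConstOnComponents G (P a))
    (hfix : ∀ v, ConstOnComponents G v → P *ᵥ v = v) (a b : Fin d) :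
    P a b = if G.Reachable b a then 1 / (compCard G b : ℝ) else 0 := by
  let χ : Fin d → ℝ := fun m => if G.Reachable b m then 1 else 0
  have hχ : ConstOnComponents G χ := fun p q hpq => by
    simp only [χ, show G.Reachable b p ↔ G.Reachable b q from
      ⟨fun h => h.trans hpq, fun h => h.trans hpq.symm⟩]
  have hmass : (P *ᵥ χ) a = P a b * compCard G b := by
    simp only [mulVec, dotProduct, χ, mul_ite, mul_one, mul_zero, ← Finset.sum_filter]
    rw [Finset.sum_congr rfl fun m hm => (hrow a b m (Finset.mem_filter.1 hm).2).symm,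
      Finset.sum_const, nsmul_eq_mul, mul_comm, compCard, Nat.card_eq_fintype_card,
      Fintype.card_subtype]
  have hcard : (0 : ℝ) < compCard G b := by exact_mod_cast compCard_pos G b
  rw [hfix χ hχ] at hmass
  simp only [χ] at hmass
  split_ifs at hmass ⊢
  · rw [eq_div_iff hcard.ne', ← hmass]
  · exact (mul_eq_zero.1 hmass.symm).resolve_right hcard.ne'

end SupportGraph

theorem stmt_8_general {d : ℕ} (A : Matrix (Fin d) (Fin d) ℝ)
    (hsymm : A.IsSymm) (hnn : ∀ i j, 0 ≤ A i j)
    (K : ℕ)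
    (V : Matrix (Fin d) (Fin K) ℝ)
    (hVorth : Vᵀ * V = 1)
    (hVker : ∀ k, lapM A *ᵥ (fun i => V i k) = 0)
    (hVspan : ∀ v : Fin d → ℝ, lapM A *ᵥ v = 0 →
      ∃ c : Fin K → ℝ, v = ∑ k, c k • fun i => V i k)
    (w : Fin K → ℝ) (hw : ∀ k, 0 ≤ w k) :
    ∀ i j : Fin d, i ≠ j →
      ((suppGraphM A).Reachable i j → ∑ k, w k * (V i k - V j k) ^ 2 = 0) ∧
      (¬ (suppGraphM A).Reachable i j →
        2 * (⨅ k, w k) / (maxCompCard (suppGraphM A) : ℝ)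
          ≤ (⨅ k, w k) * (1 / (compCard (suppGraphM A) i : ℝ)
              + 1 / (compCard (suppGraphM A) j : ℝ)) ∧
        (⨅ k, w k) * (1 / (compCard (suppGraphM A) i : ℝ)
            + 1 / (compCard (suppGraphM A) j : ℝ))
          ≤ ∑ k, w k * (V i k - V j k) ^ 2) := by
  set G := suppGraphM A
  have hker : ∀ v, lapM A *ᵥ v = 0 ↔ ConstOnComponents G v := fun v =>
    lapM_mulVec_eq_zero_iff_constOnComponents hsymm hnn
  have hcol : ∀ k, ConstOnComponents G fun i => V i k := fun k => (hker _).1 (hVker k)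
  have hP := apply_eq_of_fixes_constOnComponents (P := V * Vᵀ)
    (fun a => by rw [mul_transpose_row_eq_mulVec]; exact constOnComponents_mulVec hcol _)
    (fun v hv => by
      obtain ⟨c, rfl⟩ := hVspan v ((hker v).2 hv)
      rw [sum_smul_col_eq_mulVec]
      exact mul_transpose_mulVec_mulVec hVorth c)
  intro i j _
  refine ⟨fun hij => ?_, fun hij => ⟨?_, ?_⟩⟩
  · exact Finset.sum_eq_zero fun k _ => by simp [show V i k = V j k from hcol k i j hij]
  · have hpos := fun a => (Nat.cast_pos (α := ℝ)).2 (compCard_pos G a)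
    exact two_mul_div_le_mul_one_div_add_one_div (Real.iInf_nonneg hw) (hpos i) (hpos j)
      (by exact_mod_cast compCard_le_maxCompCard G i)
      (by exact_mod_cast compCard_le_maxCompCard G j)
  · have hdist : ∑ k, (V i k - V j k) ^ 2 =
        1 / (compCard G i : ℝ) + 1 / (compCard G j : ℝ) := by
      rw [sum_sub_sq_eq_mul_transpose, hP i i, hP i j, hP j j,
        if_pos (SimpleGraph.Reachable.refl i), if_neg fun h => hij h.symm,
        if_pos (SimpleGraph.Reachable.refl j)]
      ring
    rw [← hdist]
    exact iInf_mul_sum_le w _ fun k => sq_nonneg _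

/-- the Laplacian coefficient built from an orthonormal kernel basis
vanishes within blocks and is large across blocks. -/
theorem stmt_8 {d : ℕ} (hd : 1 ≤ d) (A : Matrix (Fin d) (Fin d) ℝ)
    (hsymm : A.IsSymm) (hdiag : ∀ i, A i i = 0) (hnn : ∀ i j, 0 ≤ A i j)
    (K : ℕ) (hK : Nat.card (suppGraphM A).ConnectedComponent = K)
    (V : Matrix (Fin d) (Fin K) ℝ)
    (hVorth : Vᵀ * V = 1)
    (hVker : ∀ k, lapM A *ᵥ (fun i => V i k) = 0)
    (hVspan : ∀ v : Fin d → ℝ, lapM A *ᵥ v = 0 →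
      ∃ c : Fin K → ℝ, v = ∑ k, c k • fun i => V i k)
    (w : Fin K → ℝ) (hw : ∀ k, 0 ≤ w k) :
    ∀ i j : Fin d, i ≠ j →
      ((suppGraphM A).Reachable i j → ∑ k, w k * (V i k - V j k) ^ 2 = 0) ∧
      (¬ (suppGraphM A).Reachable i j →
        2 * (⨅ k, w k) / (maxCompCard (suppGraphM A) : ℝ)
          ≤ (⨅ k, w k) * (1 / (compCard (suppGraphM A) i : ℝ)
              + 1 / (compCard (suppGraphM A) j : ℝ)) ∧
        (⨅ k, w k) * (1 / (compCard (suppGraphM A) i : ℝ)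
            + 1 / (compCard (suppGraphM A) j : ℝ))
          ≤ ∑ k, w k * (V i k - V j k) ^ 2) :=
  stmt_8_general A hsymm hnn K V hVorth hVker hVspan w hw

end FCLS
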